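/- arXiv:0909.1723 — 3 statements merged into one kernel-verified Lean document; each statement's English description precedes it below -/
import Mathlib

section
/- If two permutations π and σ of the vertex set of a finite undirected graph Y induce the same acyclic orientation of Y (i.e., for every edge {i,j}, i precedes j in π if and only if i precedes j in σ), then the sequential dynamical system maps [F_Y, π] and [F_Y, σ] are equal as functions K^n → K^n. -/
/-- The SDS map `[F_Y, π] = F_{π_n} ∘ ⋯ ∘ F_{π_1}`: apply the local functions
in the order given by the permutation `π`. -/
def sdsMap {n : ℕ} {K : Type*} (F : Fin n → (Fin n → K) → (Fin n → K))
    (π : Equiv.Perm (Fin n)) (x : Fin n → K) : Fin n → K :=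
  (List.ofFn (fun k => π k)).foldl (fun y i => F i y) x

/-!
Unfold the composition: when vertex `i` is updated, every vertex that precedes it in `π`
already carries its final value and every other vertex still carries its initial one, so
the final value of `i` is `F i` applied to that mixed state. This recursion along `π`
only consults the neighbours of `i`, and for those the precedence relation is fixed by the
acyclic orientation; induction along `π` then shows the final values agree for `π` and `σ`.
-/

section

variable {n : ℕ} {K : Type*}

/-- The value vertex `i` takes when it is updated in the order `π`, and keeps from then on. -/
def sdsValue (F : Fin n → (Fin n → K) → (Fin n → K)) (π : Equiv.Perm (Fin n))
    (x : Fin n → K) (i : Fin n) : K :=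
  F i (fun j => if π.symm j < π.symm i then sdsValue F π x j else x j) i
termination_by π.symm i

lemma foldl_ofFn_castLE_apply {F : Fin n → (Fin n → K) → (Fin n → K)}
    (hloc : ∀ i x j, j ≠ i → F i x j = x j) (π : Equiv.Perm (Fin n)) (x : Fin n → K) {m : ℕ}
    (hm : m ≤ n) (j : Fin n) :
    (List.ofFn fun k : Fin m => π (Fin.castLE hm k)).foldl (fun y i => F i y) x j
      = if (π.symm j : ℕ) < m then sdsValue F π x j else x j := by
  induction m generalizing j with
  | zero => simp
  | succ m ih =>
    set v : Fin n := π ⟨m, hm⟩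
    have hv : π.symm v = ⟨m, hm⟩ := π.symm_apply_apply _
    have hsplit : (List.ofFn fun k : Fin (m + 1) => π (Fin.castLE hm k))
        = (List.ofFn fun k : Fin m => π (Fin.castLE (Nat.le_of_succ_le hm) k)) ++ [v] := by
      rw [List.ofFn_succ', List.concat_eq_append]; rfl
    rw [hsplit, List.foldl_append, List.foldl_cons, List.foldl_nil]
    by_cases hj : j = v
    · subst hj
      rw [if_pos (by rw [hv]; exact m.lt_succ_self), sdsValue]
      congr 1
      funext k
      rw [ih, hv]
      rfl
    · have hjm : (π.symm j : ℕ) ≠ m := fun h => hj (π.symm_apply_eq.mp (Fin.ext h))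
      rw [hloc _ _ j hj, ih]
      split_ifs <;> first | rfl | omega

lemma sdsMap_apply {F : Fin n → (Fin n → K) → (Fin n → K)}
    (hloc : ∀ i x j, j ≠ i → F i x j = x j) (π : Equiv.Perm (Fin n)) (x : Fin n → K)
    (j : Fin n) : sdsMap F π x j = sdsValue F π x j := by
  simpa [sdsMap, (π.symm j).isLt] using foldl_ofFn_castLE_apply hloc π x le_rfl j

lemma sdsValue_eq_of_orientation_eq (Y : SimpleGraph (Fin n))
    {F : Fin n → (Fin n → K) → (Fin n → K)}
    (hdep : ∀ i (x y : Fin n → K),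
      (∀ j, (j = i ∨ Y.Adj i j) → x j = y j) → F i x i = F i y i)
    {π σ : Equiv.Perm (Fin n)}
    (hsame : ∀ i j, Y.Adj i j → (π.symm i < π.symm j ↔ σ.symm i < σ.symm j))
    (x : Fin n → K) : sdsValue F π x = sdsValue F σ x := by
  suffices h : ∀ k, sdsValue F π x (π k) = sdsValue F σ x (π k) by
    funext i
    simpa using h (π.symm i)
  intro k
  induction k using WellFoundedLT.induction with
  | _ k ih =>
    rw [sdsValue, sdsValue]
    apply hdep
    rintro j (rfl | hadj)
    · simp
    · have hpos := hsame j (π k) hadj.symm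
      by_cases hlt : π.symm j < π.symm (π k)
      · rw [if_pos hlt, if_pos (hpos.mp hlt)]
        simpa using ih (π.symm j) (by simpa using hlt)
      · rw [if_neg hlt, if_neg (mt hpos.mpr hlt)]

end

/-- If two permutations induce the same acyclic orientation (i.e. agree on the
relative order of the endpoints of every edge), the SDS maps coincide. -/
theorem stmt0 {n : ℕ} {K : Type*} (Y : SimpleGraph (Fin n))
    (F : Fin n → (Fin n → K) → (Fin n → K))
    (hloc : ∀ i x j, j ≠ i → F i x j = x j)
    (hdep : ∀ i (x y : Fin n → K),
      (∀ j, (j = i ∨ Y.Adj i j) → x j = y j) → F i x i = F i y i)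
    (π σ : Equiv.Perm (Fin n))
    (hsame : ∀ i j, Y.Adj i j → (π.symm i < π.symm j ↔ σ.symm i < σ.symm j)) :
    sdsMap F π = sdsMap F σ := by
  funext x j
  rw [sdsMap_apply hloc, sdsMap_apply hloc, sdsValue_eq_of_orientation_eq Y hdep hsame]
end

section
/- Let Y be a finite undirected graph, γ an automorphism of Y, and suppose the sequence of Y-local functions F_Y is Aut(Y)-invariant, meaning γ ∘ F_v = F_{γ(v)} ∘ γ for all vertices v, where γ acts on K^n by permuting coordinates. Then for any permutation π of the vertices, γ ∘ [F_Y, π] ∘ γ^{-1} = [F_Y, γπ], where γπ is the permutation obtained by applying γ to each entry of π. In particular [F_Y, π] and [F_Y, γπ] are conjugate, hence dynamically equivalent. -/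
/-- The action of a permutation `γ` on states: `(γ·x)_i = x_{γ⁻¹(i)}`. -/
def permAct {n : ℕ} {K : Type*} (γ : Equiv.Perm (Fin n)) (x : Fin n → K) :
    Fin n → K :=
  fun i => x (γ.symm i)

section

variable {n : ℕ} {K : Type*}

lemma permAct_permAct_inv (γ : Equiv.Perm (Fin n)) (x : Fin n → K) :
    permAct γ (permAct γ⁻¹ x) = x := by
  funext i
  simp [permAct, Equiv.Perm.inv_def]

lemma permAct_foldl (F : Fin n → (Fin n → K) → (Fin n → K)) (γ : Equiv.Perm (Fin n))
    (hinv : ∀ v x, permAct γ (F v x) = F (γ v) (permAct γ x)) (l : List (Fin n))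
    (x : Fin n → K) :
    permAct γ (l.foldl (fun y i => F i y) x)
      = (l.map γ).foldl (fun y i => F i y) (permAct γ x) := by
  rw [List.foldl_map]
  exact (List.foldl_hom (permAct γ) fun y v => (hinv v y).symm).symm

lemma permAct_sdsMap (F : Fin n → (Fin n → K) → (Fin n → K)) (γ : Equiv.Perm (Fin n))
    (hinv : ∀ v x, permAct γ (F v x) = F (γ v) (permAct γ x)) (π : Equiv.Perm (Fin n))
    (x : Fin n → K) :
    permAct γ (sdsMap F π x) = sdsMap F (γ * π) (permAct γ x) := by
  rw [sdsMap, permAct_foldl F γ hinv, List.map_ofFn]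
  rfl

end

theorem stmt3_general {n : ℕ} {K : Type*}
    (F : Fin n → (Fin n → K) → (Fin n → K))
    (γ : Equiv.Perm (Fin n))
    (hinv : ∀ v x, permAct γ (F v x) = F (γ v) (permAct γ x))
    (π : Equiv.Perm (Fin n)) :
    ∀ x : Fin n → K,
      permAct γ (sdsMap F π (permAct γ⁻¹ x)) = sdsMap F (γ * π) x := by
  intro x
  rw [permAct_sdsMap F γ hinv, permAct_permAct_inv]

/-- If `γ` is a graph automorphism and the `Y`-local functions are
`Aut(Y)`-invariant, then `γ ∘ [F_Y, π] ∘ γ⁻¹ = [F_Y, γπ]`; in particular the two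
SDS maps are conjugate, hence dynamically equivalent. -/
theorem stmt3 {n : ℕ} {K : Type*} (Y : SimpleGraph (Fin n))
    (F : Fin n → (Fin n → K) → (Fin n → K))
    (hloc : ∀ i x j, j ≠ i → F i x j = x j)
    (γ : Equiv.Perm (Fin n))
    (hγ : ∀ i j, Y.Adj (γ i) (γ j) ↔ Y.Adj i j)
    (hinv : ∀ v x, permAct γ (F v x) = F (γ v) (permAct γ x))
    (π : Equiv.Perm (Fin n)) :
    ∀ x : Fin n → K,
      permAct γ (sdsMap F π (permAct γ⁻¹ x)) = sdsMap F (γ * π) x :=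
  stmt3_general F γ hinv π
end

section
/- If Y is a tree on n ≥ 1 vertices, then any two acyclic orientations of Y are related by a sequence of source-to-sink operations; equivalently κ(Y) = 1. -/
/-- An orientation of a simple graph `Y`. -/
structure Orient {n : ℕ} (Y : SimpleGraph (Fin n)) where
  dir : Fin n → Fin n → Prop
  dir_adj : ∀ i j, dir i j → Y.Adj i j
  dir_iff : ∀ i j, Y.Adj i j → (dir i j ↔ ¬ dir j i)

/-- An orientation is acyclic if it induces no directed cycle. -/
def IsAcyc {n : ℕ} {Y : SimpleGraph (Fin n)} (o : Orient Y) : Prop :=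
  ∀ v, ¬ Relation.TransGen o.dir v v

/-- A source of an orientation: a vertex with no incoming edges. -/
def IsSource {n : ℕ} {Y : SimpleGraph (Fin n)} (o : Orient Y) (v : Fin n) : Prop :=
  ∀ j, ¬ o.dir j v

/-- The source-to-sink (click) relation: `o'` is obtained from `o` by choosing a
source `v` of `o` and reversing all edges incident to `v`. -/
def ClickRel {n : ℕ} {Y : SimpleGraph (Fin n)} (o o' : Orient Y) : Prop :=
  ∃ v, IsSource o v ∧
    ∀ i j, o'.dir i j ↔ (if i = v ∨ j = v then o.dir j i else o.dir i j)

/-!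
Clicking the vertices of a predecessor-closed set `S` of an acyclic orientation one at a time,
each a source of what remains of `S`, reverses exactly the edges between `S` and its complement.
Hence a click at `v` is undone by clicking all other vertices, so click-equivalence is symmetric.
Fix a root `r`. Clicking the set of vertices not reachable from `r` reverses the edges entering
the reachable part, and in a connected graph at least one such edge exists, so iterating makes
every vertex reachable from `r`. In a tree at most one orientation has this property: if two
disagreed on an edge, directed walks from `r` would join its ends avoiding it, but every edge of a
tree is a bridge.
-/

open Relation

namespace Orient

variable {n : ℕ} {Y : SimpleGraph (Fin n)}

theorem ext {o o' : Orient Y} (h : ∀ i j, o.dir i j ↔ o'.dir i j) : o = o' := by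
  obtain ⟨d, _, _⟩ := o
  obtain ⟨d', _, _⟩ := o'
  obtain rfl : d = d' := funext₂ fun i j => propext (h i j)
  rfl

theorem not_dir_self (o : Orient Y) (i : Fin n) : ¬ o.dir i i :=
  fun h => (o.dir_adj i i h).ne rfl

theorem not_dir_of_dir (o : Orient Y) {i j : Fin n} (h : o.dir i j) : ¬ o.dir j i :=
  (o.dir_iff i j (o.dir_adj i j h)).mp h

def flip (o : Orient Y) (S : Finset (Fin n)) : Orient Y where
  dir i j := if (i ∈ S ↔ j ∈ S) then o.dir i j else o.dir j i
  dir_adj i j h := by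
    split_ifs at h
    · exact o.dir_adj i j h
    · exact (o.dir_adj j i h).symm
  dir_iff i j hij := by
    by_cases hS : i ∈ S ↔ j ∈ S
    · simpa [hS] using o.dir_iff i j hij
    · simpa [hS, Iff.comm] using o.dir_iff j i hij.symm

@[simp]
theorem flip_dir (o : Orient Y) (S : Finset (Fin n)) (i j : Fin n) :
    (o.flip S).dir i j = if (i ∈ S ↔ j ∈ S) then o.dir i j else o.dir j i :=
  rfl

@[simp]
theorem flip_empty (o : Orient Y) : o.flip ∅ = o :=
  ext fun i j => by simp

theorem flip_compl (o : Orient Y) (S : Finset (Fin n)) : o.flip Sᶜ = o.flip S :=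
  ext fun i j => by simp [not_iff_not]

theorem flip_flip (o : Orient Y) (S T : Finset (Fin n)) :
    (o.flip S).flip T = o.flip (symmDiff S T) :=
  ext fun i j => by
    simp only [flip_dir, Finset.mem_symmDiff]
    by_cases hi : i ∈ S <;> by_cases hj : j ∈ S <;> by_cases hi' : i ∈ T <;>
      by_cases hj' : j ∈ T <;> simp [hi, hj, hi', hj']

theorem clickRel_flip_singleton {o : Orient Y} {v : Fin n} (hv : IsSource o v) :
    ClickRel o (o.flip {v}) := by
  refine ⟨v, hv, fun i j => ?_⟩
  by_cases hi : i = v <;> by_cases hj : j = v <;> simp [hi, hj]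

theorem eq_flip_of_clickRel {o o' : Orient Y} (h : ClickRel o o') :
    ∃ v, IsSource o v ∧ o' = o.flip {v} := by
  obtain ⟨v, hv, h⟩ := h
  refine ⟨v, hv, ext fun i j => ?_⟩
  rw [h]
  by_cases hi : i = v <;> by_cases hj : j = v <;> simp [hi, hj]

theorem not_flip_singleton_dir {o : Orient Y} {v : Fin n} (hv : IsSource o v) (j : Fin n) :
    ¬ (o.flip {v}).dir v j := by
  by_cases hj : j = v
  · subst hj
    exact not_dir_self _ j
  · simpa [hj] using hv j

theorem flip_singleton_dir_iff {o : Orient Y} {v i j : Fin n} (hi : i ≠ v) (hj : j ≠ v) :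
    (o.flip {v}).dir i j ↔ o.dir i j := by
  simp [hi, hj]

end Orient

namespace IsAcyc

variable {n : ℕ} {Y : SimpleGraph (Fin n)} {o : Orient Y}

theorem wellFounded (ho : IsAcyc o) : WellFounded o.dir :=
  have : IsTrans (Fin n) (TransGen o.dir) := ⟨fun _ _ _ => TransGen.trans⟩
  have : Std.Irrefl (TransGen o.dir) := ⟨ho⟩
  Subrelation.wf TransGen.single (Finite.wellFounded_of_trans_of_irrefl _)

/-- Clicking a source turns it into a sink, so no cycle can pass through it, and away from it
nothing changes. -/
theorem flip_singleton (ho : IsAcyc o) {v : Fin n} (hv : IsSource o v) :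
    IsAcyc (o.flip {v}) := by
  have hsink := Orient.not_flip_singleton_dir hv
  have lift : ∀ {a b}, TransGen (o.flip {v}).dir a b → b ≠ v → TransGen o.dir a b := by
    intro a b h hb
    induction h with
    | single h =>
      exact .single ((Orient.flip_singleton_dir_iff (by rintro rfl; exact hsink _ h) hb).mp h)
    | @tail c _ _ h ih =>
      have hc : c ≠ v := by rintro rfl; exact hsink _ h
      exact (ih hc).tail ((Orient.flip_singleton_dir_iff hc hb).mp h)
  intro x hx
  by_cases hxv : x = v
  · obtain ⟨y, hxy, -⟩ := TransGen.head'_iff.mp hx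
    exact hsink y (hxv ▸ hxy)
  · exact ho x (lift hx hxv)

theorem of_clickRel (ho : IsAcyc o) {o' : Orient Y} (h : ClickRel o o') : IsAcyc o' := by
  obtain ⟨v, hv, rfl⟩ := Orient.eq_flip_of_clickRel h
  exact ho.flip_singleton hv

theorem of_reflTransGen (ho : IsAcyc o) {o' : Orient Y} (h : ReflTransGen ClickRel o o') :
    IsAcyc o' := by
  induction h with
  | refl => exact ho
  | tail _ h ih => exact ih.of_clickRel h

end IsAcyc

namespace Orient

variable {n : ℕ} {Y : SimpleGraph (Fin n)}

def IsPredClosed (o : Orient Y) (S : Finset (Fin n)) : Prop :=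
  ∀ i j, o.dir i j → j ∈ S → i ∈ S

theorem IsPredClosed.exists_isSource {o : Orient Y} {S : Finset (Fin n)} (hS : o.IsPredClosed S)
    (ho : IsAcyc o) (hne : S.Nonempty) : ∃ v ∈ S, IsSource o v := by
  obtain ⟨v, hvS, hmin⟩ := ho.wellFounded.has_min (S : Set (Fin n)) hne
  exact ⟨v, hvS, fun j hj => hmin j (hS j v hj hvS) hj⟩

theorem reflTransGen_clickRel_flip {o : Orient Y} {S : Finset (Fin n)} (ho : IsAcyc o)
    (hS : o.IsPredClosed S) : ReflTransGen ClickRel o (o.flip S) := by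
  induction S using Finset.strongInduction generalizing o with
  | H S ih =>
  obtain rfl | hne := S.eq_empty_or_nonempty
  · rw [flip_empty]
  obtain ⟨v, hvS, hv⟩ := hS.exists_isSource ho hne
  have hS' : (o.flip {v}).IsPredClosed (S.erase v) := by
    intro i j hij hj
    have hjv := Finset.ne_of_mem_erase hj
    have hiv : i ≠ v := by rintro rfl; exact not_flip_singleton_dir hv j hij
    exact Finset.mem_erase.mpr ⟨hiv, hS i j ((flip_singleton_dir_iff hiv hjv).mp hij)
      (Finset.mem_of_mem_erase hj)⟩
  have hflip : (o.flip {v}).flip (S.erase v) = o.flip S := by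
    rw [flip_flip]
    congr 1
    ext x
    by_cases hx : x = v <;> simp [Finset.mem_symmDiff, hx, hvS]
  exact .head (clickRel_flip_singleton hv)
    (hflip ▸ ih _ (Finset.erase_ssubset hvS) (ho.flip_singleton hv) hS')

theorem reflTransGen_clickRel_of_clickRel {o o' : Orient Y} (ho : IsAcyc o) (h : ClickRel o o') :
    ReflTransGen ClickRel o' o := by
  obtain ⟨v, hv, rfl⟩ := eq_flip_of_clickRel h
  have hS : (o.flip {v}).IsPredClosed {v}ᶜ := by
    intro i j hij _
    simp only [Finset.mem_compl, Finset.mem_singleton]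
    rintro rfl
    exact not_flip_singleton_dir hv j hij
  have := reflTransGen_clickRel_flip (ho.flip_singleton hv) hS
  rwa [flip_compl, flip_flip, symmDiff_self, Finset.bot_eq_empty, flip_empty] at this

theorem reflTransGen_clickRel_symm {o o' : Orient Y} (ho : IsAcyc o)
    (h : ReflTransGen ClickRel o o') : ReflTransGen ClickRel o' o := by
  induction h with
  | refl => exact .refl
  | tail hop hpp' ih =>
    exact .trans (reflTransGen_clickRel_of_clickRel (ho.of_reflTransGen hop) hpp') ih

def IsRootedAt (o : Orient Y) (r : Fin n) : Prop :=
  ∀ x, ReflTransGen o.dir r x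

open Classical in
noncomputable def unreached (o : Orient Y) (r : Fin n) : Finset (Fin n) :=
  Finset.univ.filter fun x => ¬ ReflTransGen o.dir r x

theorem mem_unreached {o : Orient Y} {r x : Fin n} :
    x ∈ o.unreached r ↔ ¬ ReflTransGen o.dir r x := by
  simp [unreached]

theorem isPredClosed_unreached (o : Orient Y) (r : Fin n) : o.IsPredClosed (o.unreached r) := by
  intro i j hij hj
  simp only [mem_unreached] at hj ⊢
  exact fun hi => hj (hi.tail hij)

theorem reflTransGen_flip_unreached {o : Orient Y} {r x : Fin n} (h : ReflTransGen o.dir r x) :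
    ReflTransGen (o.flip (o.unreached r)).dir r x := by
  induction h with
  | refl => exact .refl
  | @tail y x hy hyx ih =>
    have hsame : y ∈ o.unreached r ↔ x ∈ o.unreached r := by
      simp only [mem_unreached, hy, hy.tail hyx]
    exact ih.tail (by simpa [hsame] using hyx)

theorem unreached_flip_ssubset (hY : Y.Connected) {o : Orient Y} {r : Fin n}
    (hne : (o.unreached r).Nonempty) : (o.flip (o.unreached r)).unreached r ⊂ o.unreached r := by
  refine Finset.ssubset_iff_subset_ne.mpr ⟨fun x hx => ?_, fun hEq => ?_⟩
  · rw [mem_unreached] at hx ⊢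
    exact fun h => hx (reflTransGen_flip_unreached h)
  obtain ⟨b, hb⟩ := hne
  obtain ⟨d, -, hd, hdB⟩ :=
    (hY.preconnected r b).some.exists_boundary_dart {x | x ∉ o.unreached r}
      (by simpa [mem_unreached] using ReflTransGen.refl) (by simpa using hb)
  simp only [Set.mem_ofPred_eq, not_not] at hd hdB
  have hreach : ReflTransGen o.dir r d.fst := by simpa [mem_unreached] using hd
  have hdir : o.dir d.snd d.fst := by
    refine (o.dir_iff _ _ d.adj.symm).mpr fun h => ?_
    exact (mem_unreached.mp hdB) (hreach.tail h)
  have hnew : d.snd ∉ (o.flip (o.unreached r)).unreached r := by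
    rw [mem_unreached, not_not]
    exact (reflTransGen_flip_unreached hreach).tail (by simpa [hd, hdB] using hdir)
  rw [hEq] at hnew
  exact hnew hdB

theorem exists_reflTransGen_clickRel_isRootedAt (hY : Y.Connected) {o : Orient Y}
    (ho : IsAcyc o) (r : Fin n) : ∃ p, ReflTransGen ClickRel o p ∧ p.IsRootedAt r := by
  induction hB : o.unreached r using Finset.strongInduction generalizing o with
  | H B ih =>
  obtain rfl | hne := B.eq_empty_or_nonempty
  · refine ⟨o, .refl, fun x => ?_⟩
    by_contra hx
    simpa [hB] using mem_unreached.mpr hx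
  subst hB
  obtain ⟨p, hp, hpr⟩ := ih _ (unreached_flip_ssubset hY hne)
    (ho.of_reflTransGen (reflTransGen_clickRel_flip ho (isPredClosed_unreached o r))) rfl
  exact ⟨p, (reflTransGen_clickRel_flip ho (isPredClosed_unreached o r)).trans hp, hpr⟩

/-- A directed walk from `r` to the tail `a` of the edge `a → b` never needs that edge: it could
only cross it from `a`, and it reaches `a` before ever crossing. -/
theorem reachable_deleteEdges_of_reflTransGen (o : Orient Y) {r a b : Fin n} (hab : o.dir a b)
    (hra : ReflTransGen o.dir r a) : (Y.deleteEdges {s(a, b)}).Reachable r a := by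
  by_contra hU
  suffices ∀ x, ReflTransGen o.dir r x → (Y.deleteEdges {s(a, b)}).Reachable r x from
    hU (this a hra)
  intro x hx
  induction hx with
  | refl => rfl
  | @tail y x _ hyx ih =>
    by_cases hedge : s(y, x) = s(a, b)
    · rcases Sym2.eq_iff.mp hedge with ⟨rfl, -⟩ | ⟨rfl, rfl⟩
      · exact absurd ih hU
      · exact absurd hyx (o.not_dir_of_dir hab)
    · exact ih.trans (SimpleGraph.deleteEdges_adj.mpr ⟨o.dir_adj y x hyx, hedge⟩).reachable

theorem IsRootedAt.dir_of_dir (hY : Y.IsAcyclic) {o o' : Orient Y} {r : Fin n}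
    (ho : o.IsRootedAt r) (ho' : o'.IsRootedAt r) {i j : Fin n} (hij : o.dir i j) :
    o'.dir i j := by
  by_contra hn
  have hadj := o.dir_adj i j hij
  have hji : o'.dir j i := (o'.dir_iff j i hadj.symm).mpr hn
  have hri := o.reachable_deleteEdges_of_reflTransGen hij (ho i)
  have hrj := o'.reachable_deleteEdges_of_reflTransGen hji (ho' j)
  rw [Sym2.eq_swap] at hrj
  exact SimpleGraph.isBridge_iff.mp (SimpleGraph.isAcyclic_iff_forall_adj_isBridge.mp hY hadj)
    (hri.symm.trans hrj)

theorem IsRootedAt.eq (hY : Y.IsAcyclic) {o o' : Orient Y} {r : Fin n}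
    (ho : o.IsRootedAt r) (ho' : o'.IsRootedAt r) : o = o' :=
  ext fun _ _ => ⟨ho.dir_of_dir hY ho', ho'.dir_of_dir hY ho⟩

end Orient

theorem stmt4_general {n : ℕ} (Y : SimpleGraph (Fin n)) (hY : Y.IsTree)
    (o o' : Orient Y) (ho : IsAcyc o) (ho' : IsAcyc o') :
    Relation.ReflTransGen ClickRel o o' := by
  obtain ⟨r⟩ := hY.connected.nonempty
  obtain ⟨p, hop, hp⟩ := Orient.exists_reflTransGen_clickRel_isRootedAt hY.connected ho r
  obtain ⟨p', hop', hp'⟩ := Orient.exists_reflTransGen_clickRel_isRootedAt hY.connected ho' r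
  obtain rfl := hp.eq hY.isAcyclic hp'
  exact hop.trans (Orient.reflTransGen_clickRel_symm ho' hop')

/-- If `Y` is a tree, any two acyclic orientations are related by a sequence of
source-to-sink operations; equivalently `κ(Y) = 1`. -/
theorem stmt4 {n : ℕ} (hn : 1 ≤ n) (Y : SimpleGraph (Fin n)) (hY : Y.IsTree)
    (o o' : Orient Y) (ho : IsAcyc o) (ho' : IsAcyc o') :
    Relation.ReflTransGen ClickRel o o' :=
  stmt4_general Y hY o o' ho ho'
end
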